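/- Fix n ≥ 1 and k ∈ {1, …, n}. The unital completely positive map φ_k : X_n → M_2(ℂ) that sends ⊕_{j=1}^n [[α, β_j],[γ_j, α]] ∈ X_n to its k-th 2×2 diagonal block [[α, β_k],[γ_k, α]] is pure in the cone CP(X_n, M_2(ℂ)): whenever ϑ, ω : X_n → M_2(ℂ) are completely positive linear maps with ϑ + ω = φ_k, there exists s ∈ [0,1] such that ϑ = s·φ_k and ω = (1−s)·φ_k. -/

import Mathlib

open scoped ComplexOrder

/-- The `(m·|ι|) × (m·|ι|)` matrix obtained from an `m × m` array of `ι × ι` matrices. -/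
def blockMat {ι : Type} {m : ℕ} (x : Fin m → Fin m → Matrix ι ι ℂ) :
    Matrix (Fin m × ι) (Fin m × ι) ℂ :=
  Matrix.of fun p q => x p.1 q.1 p.2 q.2

/-- Complete positivity for a linear map from a matrix operator system `S` into
`M₂(ℂ)`. -/
def IsCPFun {ι : Type} [Fintype ι] (S : Submodule ℂ (Matrix ι ι ℂ))
    (φ : S →ₗ[ℂ] Matrix (Fin 2) (Fin 2) ℂ) : Prop :=
  ∀ (m : ℕ) (x : Fin m → Fin m → S),
    (blockMat fun i j => (x i j : Matrix ι ι ℂ)).PosSemidef →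
    (blockMat fun i j => φ (x i j)).PosSemidef

/-- Projection of a `2n × 2n` matrix onto its `k`-th `2 × 2` diagonal block. -/
noncomputable def projBlock (n : ℕ) (k : Fin n) :
    Matrix (Fin n × Fin 2) (Fin n × Fin 2) ℂ →ₗ[ℂ] Matrix (Fin 2) (Fin 2) ℂ where
  toFun x := Matrix.of fun i j => x (k, i) (k, j)
  map_add' _ _ := rfl
  map_smul' _ _ := rfl

/-- The block-diagonal matrix `⊕ₖ [[α, βₖ],[γₖ, α]]` in `M_{2n}(ℂ)`. -/
def xMat (n : ℕ) (α : ℂ) (β γ : Fin n → ℂ) :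
    Matrix (Fin n × Fin 2) (Fin n × Fin 2) ℂ :=
  Matrix.of fun p q => if p.1 = q.1 then !![α, β p.1; γ p.1, α] p.2 q.2 else 0

/-- The matrix operator system `Xₙ = { ⊕ₖ [[α, βₖ],[γₖ, α]] } ⊆ M_{2n}(ℂ)`. -/
noncomputable def XSys (n : ℕ) : Submodule ℂ (Matrix (Fin n × Fin 2) (Fin n × Fin 2) ℂ) :=
  Submodule.span ℂ {x | ∃ α β γ, x = xMat n α β γ}

/-- The ucp map `φ_k : Xₙ → M₂(ℂ)` sending `⊕ⱼ [[α, βⱼ],[γⱼ, α]]` to its `k`-th `2 × 2`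
diagonal block. -/
noncomputable def phiBlock (n : ℕ) (k : Fin n) : XSys n →ₗ[ℂ] Matrix (Fin 2) (Fin 2) ℂ :=
  (projBlock n k).comp (XSys n).subtype

/-!
For `|βⱼ| ≤ 1` the element `y_β = ⊕ⱼ [[1, βⱼ], [β̄ⱼ, 1]]` of `Xₙ` is positive, and when
`|β_k| = 1` its image `φ_k(y_β) = [[1, β_k], [β̄_k, 1]]` has rank one. Since
`0 ≤ ϑ(y_β) ≤ φ_k(y_β)`, the matrix `ϑ(y_β)` is a multiple of `φ_k(y_β)`. Letting `βⱼ` (`j ≠ k`)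
run through the fourth roots of unity and extracting Fourier coefficients shows that `ϑ` kills
the off-diagonal units of the blocks `j ≠ k` (the lines through `φ_k(y_β)` for `β_k = 1` and
`β_k = i` meet only in `0`); doing the same with `β_k` shows `ϑ = a φ_k` on the rest, where
`a = ϑ(1)₀₀`. Positivity of `ϑ(1) = a` and `ω(1) = 1 - a` gives `a ∈ [0, 1]`.
-/

open scoped Matrix MatrixOrder
open Complex

theorem Complex.norm_eq_one_of_pow_four_eq_one {z : ℂ} (hz : z ^ 4 = 1) : ‖z‖ = 1 :=
  (pow_eq_one_iff_of_nonneg (norm_nonneg z) four_ne_zero).mp (by rw [← norm_pow, hz, norm_one])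

theorem Complex.star_eq_pow_three_of_pow_four_eq_one {z : ℂ} (hz : z ^ 4 = 1) :
    star z = z ^ 3 := by
  have h : starRingEnd ℂ z * z = 1 := by
    rw [conj_mul', Complex.norm_eq_one_of_pow_four_eq_one hz]
    simp
  rw [star_def]
  linear_combination z ^ 3 * h - starRingEnd ℂ z * hz

/-- Discrete Fourier inversion over the fourth roots of unity. -/
theorem Submodule.mem_of_forall_pow_four_eq_one {M : Type*} [AddCommGroup M] [Module ℂ M]
    {L : Submodule ℂ M} {a b c d : M}
    (h : ∀ z : ℂ, z ^ 4 = 1 → a + z • b + z ^ 2 • c + z ^ 3 • d ∈ L) :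
    a ∈ L ∧ b ∈ L ∧ c ∈ L ∧ d ∈ L := by
  have I4 : I ^ 4 = 1 := by rw [(by norm_num : 4 = 2 * 2), pow_mul, I_sq]; norm_num
  have comb : ∀ s₁ s₂ s₃ s₄ : ℂ, s₁ • (a + (1 : ℂ) • b + (1 : ℂ) ^ 2 • c + (1 : ℂ) ^ 3 • d)
      + s₂ • (a + I • b + I ^ 2 • c + I ^ 3 • d)
      + s₃ • (a + (-1 : ℂ) • b + (-1 : ℂ) ^ 2 • c + (-1 : ℂ) ^ 3 • d)
      + s₄ • (a + (-I) • b + (-I) ^ 2 • c + (-I) ^ 3 • d) ∈ L := fun s₁ s₂ s₃ s₄ =>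
    L.add_mem (L.add_mem (L.add_mem (L.smul_mem _ (h 1 (one_pow 4))) (L.smul_mem _ (h I I4)))
      (L.smul_mem _ (h (-1) (by rw [neg_pow, one_pow]; norm_num))))
      (L.smul_mem _ (h (-I) (by rw [neg_pow, I4]; norm_num)))
  refine ⟨?_, ?_, ?_, ?_⟩ <;>
    [convert comb 4⁻¹ 4⁻¹ 4⁻¹ 4⁻¹ using 1;
      convert comb 4⁻¹ (-4⁻¹ * I) (-4⁻¹) (4⁻¹ * I) using 1;
      convert comb 4⁻¹ (-4⁻¹) 4⁻¹ (-4⁻¹) using 1;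
      convert comb 4⁻¹ (4⁻¹ * I) (-4⁻¹) (-4⁻¹ * I) using 1] <;>
    match_scalars <;> simp [Complex.ext_iff, pow_succ] <;> norm_num

theorem Complex.eq_zero_of_forall_pow_four_eq_one {a b c d : ℂ}
    (h : ∀ z : ℂ, z ^ 4 = 1 → a + z * b + z ^ 2 * c + z ^ 3 * d = 0) :
    a = 0 ∧ b = 0 ∧ c = 0 ∧ d = 0 := by
  simpa using Submodule.mem_of_forall_pow_four_eq_one (L := ⊥) (by simpa using h)

theorem Matrix.PosSemidef.mulVec_eq_zero_of_posSemidef_sub {𝕜 m : Type*} [RCLike 𝕜] [Fintype m]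
    {T R : Matrix m m 𝕜} (hT : T.PosSemidef) (hRT : (R - T).PosSemidef) {u : m → 𝕜}
    (hu : R *ᵥ u = 0) : T *ᵥ u = 0 := by
  refine (hT.dotProduct_mulVec_zero_iff u).mp (le_antisymm ?_ (hT.dotProduct_mulVec_nonneg u))
  simpa [Matrix.sub_mulVec, hu] using hRT.dotProduct_mulVec_nonneg u

theorem Matrix.PosSemidef.blockDiagonal {𝕜 m o : Type*} [RCLike 𝕜] [Fintype m] [Fintype o]
    [DecidableEq o] {B : o → Matrix m m 𝕜} (hB : ∀ i, (B i).PosSemidef) :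
    (Matrix.blockDiagonal B).PosSemidef := by
  classical
  choose S hS using fun i => CStarAlgebra.nonneg_iff_eq_star_mul_self.mp (hB i).nonneg
  have hB : Matrix.blockDiagonal B = (Matrix.blockDiagonal S)ᴴ * Matrix.blockDiagonal S := by
    rw [Matrix.blockDiagonal_conjTranspose, ← Matrix.blockDiagonal_mul]
    exact congrArg _ (funext hS)
  rw [hB]
  exact Matrix.posSemidef_conjTranspose_mul_self _

theorem IsCPFun.posSemidef_apply {ι : Type} [Fintype ι] {S : Submodule ℂ (Matrix ι ι ℂ)}
    {φ : S →ₗ[ℂ] Matrix (Fin 2) (Fin 2) ℂ} (hφ : IsCPFun S φ) {x : S}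
    (hx : (x : Matrix ι ι ℂ).PosSemidef) : (φ x).PosSemidef :=
  (hφ 1 (fun _ _ => x) (hx.submatrix Prod.snd)).submatrix fun i => ((0 : Fin 1), i)

def xBlock (α β γ : ℂ) : Matrix (Fin 2) (Fin 2) ℂ := !![α, β; γ, α]

@[simp]
theorem xBlock_zero : xBlock 0 0 0 = 0 := by
  ext i j
  fin_cases i <;> fin_cases j <;> rfl

@[simp]
theorem smul_xBlock (c α β γ : ℂ) : c • xBlock α β γ = xBlock (c * α) (c * β) (c * γ) := by
  ext i j
  fin_cases i <;> fin_cases j <;> rfl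

theorem posSemidef_xBlock_one {z : ℂ} (hz : ‖z‖ ≤ 1) : (xBlock 1 z (star z)).PosSemidef := by
  have hdecomp : xBlock 1 z (star z) = Matrix.vecMulVec ![1, star z] (star ![1, star z])
      + ((1 - ‖z‖ ^ 2 : ℝ) : ℂ) • Matrix.vecMulVec ![0, 1] (star ![0, 1]) := by
    ext i j
    simp only [Matrix.add_apply, Matrix.smul_apply, Matrix.vecMulVec_apply]
    fin_cases i <;> fin_cases j <;> simp [xBlock, conj_mul']
  rw [hdecomp]
  refine (Matrix.posSemidef_vecMulVec_self_star _).add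
    ((Matrix.posSemidef_vecMulVec_self_star _).smul ?_)
  exact_mod_cast sub_nonneg.mpr (pow_le_one₀ (norm_nonneg z) hz)

/-- `![z, -1]` spans the kernel of the rank-one matrix `xBlock 1 z z̄`; a positive `T` below it
must kill that vector too, and being hermitian it is then determined by `T 0 0`. -/
theorem mem_span_xBlock_of_posSemidef {z : ℂ} (hz : ‖z‖ = 1) {T : Matrix (Fin 2) (Fin 2) ℂ}
    (hT : T.PosSemidef) (hRT : (xBlock 1 z (star z) - T).PosSemidef) :
    T ∈ ℂ ∙ xBlock 1 z (star z) := by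
  have hzz : starRingEnd ℂ z * z = 1 := by rw [conj_mul', hz]; simp
  have hker := hT.mulVec_eq_zero_of_posSemidef_sub hRT (u := ![z, -1]) (by
    ext i; fin_cases i <;> simp [xBlock, Matrix.mulVec, dotProduct, Fin.sum_univ_two, hzz])
  have h₀ := congr_fun hker 0
  have h₁ := congr_fun hker 1
  simp only [Matrix.mulVec, dotProduct, Fin.sum_univ_two, Matrix.cons_val_zero,
    Matrix.cons_val_one, mul_neg, mul_one, Pi.zero_apply] at h₀ h₁
  have h₀₀ : starRingEnd ℂ (T 0 0) = T 0 0 := by simpa using congr_fun₂ hT.1 0 0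
  have h₁₀ : starRingEnd ℂ (T 0 1) = T 1 0 := by simpa using congr_fun₂ hT.1 1 0
  have h₀₁ : T 0 1 = T 0 0 * z := by linear_combination -h₀
  have h₁₀' : T 1 0 = T 0 0 * starRingEnd ℂ z := by rw [← h₁₀, h₀₁, map_mul, h₀₀]
  have h₁₁ : T 1 1 = T 0 0 := by linear_combination -h₁ + z * h₁₀' + T 0 0 * hzz
  refine Submodule.mem_span_singleton.mpr ⟨T 0 0, ?_⟩
  ext i j
  fin_cases i <;> fin_cases j <;> simp [xBlock, h₀₁, h₁₀', h₁₁]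

theorem eq_zero_of_mem_span_xBlock_one_of_mem_span_xBlock_I {T : Matrix (Fin 2) (Fin 2) ℂ}
    (h₁ : T ∈ ℂ ∙ xBlock 1 1 (star 1)) (hI : T ∈ ℂ ∙ xBlock 1 I (star I)) : T = 0 := by
  obtain ⟨c, rfl⟩ := Submodule.mem_span_singleton.mp h₁
  obtain ⟨d, hd⟩ := Submodule.mem_span_singleton.mp hI
  have h₀₀ := congr_fun₂ hd 0 0
  have h₀₁ := congr_fun₂ hd 0 1
  simp [xBlock] at h₀₀ h₀₁
  have hc : c * (I - 1) = 0 := by linear_combination h₀₁ - I * h₀₀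
  have hI : I - 1 ≠ 0 := fun h => by simpa using congrArg im h
  rw [(mul_eq_zero.mp hc).resolve_right hI, zero_smul]

theorem eq_xBlock_of_forall_pow_four_eq_one {A P Q : Matrix (Fin 2) (Fin 2) ℂ}
    (h : ∀ z : ℂ, z ^ 4 = 1 → A + z • P + star z • Q ∈ ℂ ∙ xBlock 1 z (star z)) :
    A = xBlock (A 0 0) 0 0 ∧ P = xBlock 0 (A 0 0) 0 ∧ Q = xBlock 0 0 (A 0 0) := by
  -- Writing `A + z • P + z̄ • Q = c • xBlock 1 z z̄`, eliminate `c` using the `(0, 0)` entry;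
  -- as `z̄ = z³`, every other entry becomes a polynomial identity in `z` of degree `≤ 3`.
  have key : ∀ z : ℂ, z ^ 4 = 1 →
      (A 0 1 - Q 0 0) + z * (P 0 1 - A 0 0) + z ^ 2 * (-P 0 0) + z ^ 3 * Q 0 1 = 0 ∧
      (A 1 0 - P 0 0) + z * P 1 0 + z ^ 2 * (-Q 0 0) + z ^ 3 * (Q 1 0 - A 0 0) = 0 ∧
      (A 1 1 - A 0 0) + z * (P 1 1 - P 0 0) + z ^ 2 * 0 + z ^ 3 * (Q 1 1 - Q 0 0) = 0 := by
    intro z hz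
    obtain ⟨c, hc⟩ := Submodule.mem_span_singleton.mp (h z hz)
    rw [Complex.star_eq_pow_three_of_pow_four_eq_one hz] at hc
    have e₀₀ := congr_fun₂ hc 0 0
    have e₀₁ := congr_fun₂ hc 0 1
    have e₁₀ := congr_fun₂ hc 1 0
    have e₁₁ := congr_fun₂ hc 1 1
    simp [xBlock] at e₀₀ e₀₁ e₁₀ e₁₁
    refine ⟨?_, ?_, ?_⟩
    · linear_combination z * e₀₀ - e₀₁ + Q 0 0 * hz
    · linear_combination z ^ 3 * e₀₀ - e₁₀ + (P 0 0 + z ^ 2 * Q 0 0) * hz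
    · linear_combination e₀₀ - e₁₁
  obtain ⟨a₀₁, p₀₁, p₀₀, q₀₁⟩ :=
    Complex.eq_zero_of_forall_pow_four_eq_one fun z hz => (key z hz).1
  obtain ⟨a₁₀, p₁₀, q₀₀, q₁₀⟩ :=
    Complex.eq_zero_of_forall_pow_four_eq_one fun z hz => (key z hz).2.1
  obtain ⟨a₁₁, p₁₁, -, q₁₁⟩ :=
    Complex.eq_zero_of_forall_pow_four_eq_one fun z hz => (key z hz).2.2
  simp only [sub_eq_zero, neg_eq_zero] at *
  refine ⟨?_, ?_, ?_⟩ <;> ext i j <;> fin_cases i <;> fin_cases j <;>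
    simp [xBlock, a₀₁, p₀₁, p₀₀, q₀₁, a₁₀, p₁₀, q₀₀, q₁₀, a₁₁, p₁₁, q₁₁]

theorem xMat_eq_submatrix_blockDiagonal (n : ℕ) (α : ℂ) (β γ : Fin n → ℂ) :
    xMat n α β γ =
      (Matrix.blockDiagonal fun j => xBlock α (β j) (γ j)).submatrix Prod.swap Prod.swap := by
  ext ⟨j, i⟩ ⟨j', i'⟩
  simp [xMat, xBlock, Matrix.blockDiagonal_apply]

theorem posSemidef_xMat {n : ℕ} {β : Fin n → ℂ} (hβ : ∀ j, ‖β j‖ ≤ 1) :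
    (xMat n 1 β (star β)).PosSemidef := by
  rw [xMat_eq_submatrix_blockDiagonal]
  exact (Matrix.PosSemidef.blockDiagonal fun j => posSemidef_xBlock_one (hβ j)).submatrix _

/-- Coordinates `(α, β, γ)` of `xMat n α β γ`. -/
abbrev XCoord (n : ℕ) : Type := ℂ × (Fin n → ℂ) × (Fin n → ℂ)

def xLin (n : ℕ) : XCoord n →ₗ[ℂ] Matrix (Fin n × Fin 2) (Fin n × Fin 2) ℂ where
  toFun p := xMat n p.1 p.2.1 p.2.2
  map_add' p q := by
    ext ⟨j, i⟩ ⟨j', i'⟩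
    by_cases h : j = j' <;> fin_cases i <;> fin_cases i' <;> simp [xMat, h]
  map_smul' c p := by
    ext ⟨j, i⟩ ⟨j', i'⟩
    by_cases h : j = j' <;> fin_cases i <;> fin_cases i' <;> simp [xMat, h]

noncomputable def toXSys (n : ℕ) : XCoord n →ₗ[ℂ] XSys n :=
  (xLin n).codRestrict (XSys n) fun p => Submodule.subset_span ⟨p.1, p.2.1, p.2.2, rfl⟩

theorem toXSys_surjective (n : ℕ) : Function.Surjective (toXSys n) := by
  rintro ⟨x, hx⟩
  have hle : XSys n ≤ LinearMap.range (xLin n) :=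
    Submodule.span_le.mpr fun _ ⟨α, β, γ, h⟩ => ⟨(α, β, γ), h.symm⟩
  obtain ⟨p, hp⟩ := hle hx
  exact ⟨p, Subtype.ext hp⟩

@[simp]
theorem phiBlock_toXSys (n : ℕ) (k : Fin n) (p : XCoord n) :
    phiBlock n k (toXSys n p) = xBlock p.1 (p.2.1 k) (p.2.2 k) := by
  ext i j
  change xMat n p.1 p.2.1 p.2.2 (k, i) (k, j) = _
  fin_cases i <;> fin_cases j <;> simp [xMat, xBlock]

theorem map_one_add_single {n : ℕ} (Θ : XCoord n →ₗ[ℂ] Matrix (Fin 2) (Fin 2) ℂ)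
    (β : Fin n → ℂ) (j : Fin n) (w : ℂ) :
    Θ (1, β + Pi.single j w, star (β + Pi.single j w)) =
      Θ (1, β, star β) + w • Θ (0, Pi.single j 1, 0) + star w • Θ (0, 0, Pi.single j 1) := by
  have hp : ((1 : ℂ), β + Pi.single j w, star (β + Pi.single j w)) =
      (1, β, star β) + w • (0, Pi.single j 1, 0) + star w • (0, 0, Pi.single j 1) := by
    simp [← Pi.single_smul]
  rw [hp, map_add, map_add, map_smul, map_smul]

def IsProportionalOnRankOne {n : ℕ} (k : Fin n) (Θ : XCoord n →ₗ[ℂ] Matrix (Fin 2) (Fin 2) ℂ) :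
    Prop :=
  ∀ β : Fin n → ℂ, (∀ j, ‖β j‖ ≤ 1) → ‖β k‖ = 1 →
    Θ (1, β, star β) ∈ ℂ ∙ xBlock 1 (β k) (star (β k))

namespace IsProportionalOnRankOne

variable {n : ℕ} {k : Fin n} {Θ : XCoord n →ₗ[ℂ] Matrix (Fin 2) (Fin 2) ℂ}

theorem map_single_eq_zero_of_ne (hΘ : IsProportionalOnRankOne k Θ) {j : Fin n} (hjk : j ≠ k) :
    Θ (0, Pi.single j 1, 0) = 0 ∧ Θ (0, 0, Pi.single j 1) = 0 := by
  have hline : ∀ z : ℂ, ‖z‖ = 1 → Θ (0, Pi.single j 1, 0) ∈ ℂ ∙ xBlock 1 z (star z) ∧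
      Θ (0, 0, Pi.single j 1) ∈ ℂ ∙ xBlock 1 z (star z) := by
    intro z hz
    obtain ⟨-, hb, -, hd⟩ := Submodule.mem_of_forall_pow_four_eq_one
      (a := Θ (1, Pi.single k z, star (Pi.single k z))) (c := 0) fun w hw => by
        have hwn := Complex.norm_eq_one_of_pow_four_eq_one hw
        have hβ := hΘ (Pi.single k z + Pi.single j w) (fun l => by
          by_cases hl : l = k <;> by_cases hl' : l = j <;> simp [hl, hl', hz, hwn, hjk])
          (by simp [hjk.symm, hz])
        rw [map_one_add_single, Complex.star_eq_pow_three_of_pow_four_eq_one hw] at hβ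
        simpa [hjk.symm] using hβ
    exact ⟨hb, hd⟩
  exact ⟨eq_zero_of_mem_span_xBlock_one_of_mem_span_xBlock_I (hline 1 (by simp)).1
      (hline I (by simp)).1,
    eq_zero_of_mem_span_xBlock_one_of_mem_span_xBlock_I (hline 1 (by simp)).2
      (hline I (by simp)).2⟩

theorem map_eq_xBlock (hΘ : IsProportionalOnRankOne k Θ) :
    Θ (1, 0, 0) = xBlock (Θ (1, 0, 0) 0 0) 0 0 ∧
      Θ (0, Pi.single k 1, 0) = xBlock 0 (Θ (1, 0, 0) 0 0) 0 ∧
      Θ (0, 0, Pi.single k 1) = xBlock 0 0 (Θ (1, 0, 0) 0 0) := by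
  refine eq_xBlock_of_forall_pow_four_eq_one fun z hz => ?_
  have hzn := Complex.norm_eq_one_of_pow_four_eq_one hz
  have hβ := hΘ (0 + Pi.single k z) (fun l => by by_cases hl : l = k <;> simp [hl, hzn])
    (by simp [hzn])
  rw [map_one_add_single] at hβ
  simpa using hβ

theorem eq_smul_phiBlock_comp_toXSys (hΘ : IsProportionalOnRankOne k Θ) :
    Θ = Θ (1, 0, 0) 0 0 • (phiBlock n k ∘ₗ toXSys n) := by
  obtain ⟨hA, hP, hQ⟩ := hΘ.map_eq_xBlock
  refine LinearMap.prod_ext (LinearMap.ext_ring ?_) (LinearMap.prod_ext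
    (LinearMap.pi_ext' fun j => LinearMap.ext_ring ?_)
    (LinearMap.pi_ext' fun j => LinearMap.ext_ring ?_))
  all_goals simp only [LinearMap.coe_comp, Function.comp_apply, LinearMap.inl_apply,
    LinearMap.inr_apply, LinearMap.coe_single, LinearMap.smul_apply, phiBlock_toXSys]
  · change Θ (1, 0, 0) = _
    conv_lhs => rw [hA]
    simp
  · obtain rfl | hjk := eq_or_ne j k
    · simp [hP]
    · simp [(hΘ.map_single_eq_zero_of_ne hjk).1, hjk]
  · obtain rfl | hjk := eq_or_ne j k
    · simp [hQ]
    · simp [(hΘ.map_single_eq_zero_of_ne hjk).2, hjk]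

end IsProportionalOnRankOne

theorem isProportionalOnRankOne_of_add_eq_phiBlock {n : ℕ} {k : Fin n}
    {ϑ ω : XSys n →ₗ[ℂ] Matrix (Fin 2) (Fin 2) ℂ}
    (hϑ : ∀ x : XSys n, (x : Matrix (Fin n × Fin 2) (Fin n × Fin 2) ℂ).PosSemidef →
      (ϑ x).PosSemidef)
    (hω : ∀ x : XSys n, (x : Matrix (Fin n × Fin 2) (Fin n × Fin 2) ℂ).PosSemidef →
      (ω x).PosSemidef)
    (hsum : ϑ + ω = phiBlock n k) : IsProportionalOnRankOne k (ϑ ∘ₗ toXSys n) := by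
  intro β hβ hβk
  have hy := posSemidef_xMat hβ
  have hφ : ϑ (toXSys n (1, β, star β)) + ω (toXSys n (1, β, star β)) =
      xBlock 1 (β k) (star (β k)) := by
    rw [← LinearMap.add_apply, hsum, phiBlock_toXSys]
    rfl
  refine mem_span_xBlock_of_posSemidef hβk (hϑ _ hy) ?_
  rw [LinearMap.comp_apply, ← hφ, add_sub_cancel_left]
  exact hω _ hy

theorem block_projection_on_Xn_is_pure_general (n : ℕ) (k : Fin n)
    (ϑ ω : XSys n →ₗ[ℂ] Matrix (Fin 2) (Fin 2) ℂ)
    (hϑ : IsCPFun (XSys n) ϑ) (hω : IsCPFun (XSys n) ω)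
    (hsum : ϑ + ω = phiBlock n k) :
    ∃ s : ℝ, 0 ≤ s ∧ s ≤ 1 ∧
      ϑ = (s : ℂ) • phiBlock n k ∧ ω = ((1 - s : ℝ) : ℂ) • phiBlock n k := by
  set a := (ϑ ∘ₗ toXSys n) (1, 0, 0) 0 0
  have hϑa : ϑ = a • phiBlock n k := by
    rw [← LinearMap.cancel_right (toXSys_surjective n), LinearMap.smul_comp]
    exact (isProportionalOnRankOne_of_add_eq_phiBlock (fun _ => hϑ.posSemidef_apply)
      (fun _ => hω.posSemidef_apply) hsum).eq_smul_phiBlock_comp_toXSys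
  have hωa : ω = (1 - a) • phiBlock n k := by
    rw [hϑa] at hsum
    rw [eq_sub_of_add_eq' hsum]
    module
  have hone : (xMat n 1 0 0).PosSemidef := by
    simpa using posSemidef_xMat (β := (0 : Fin n → ℂ)) (by simp)
  have ha : 0 ≤ a := by
    simpa [hϑa, xBlock] using
      (hϑ.posSemidef_apply (x := toXSys n (1, 0, 0)) hone).diag_nonneg (i := 0)
  have ha' : 0 ≤ 1 - a := by
    simpa [hωa, xBlock] using
      (hω.posSemidef_apply (x := toXSys n (1, 0, 0)) hone).diag_nonneg (i := 0)
  have hre : a = (a.re : ℂ) := Complex.eq_re_of_ofReal_le (r := 0) (by simpa using ha)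
  refine ⟨a.re, Complex.zero_le_real.mp (hre ▸ ha), ?_, hre ▸ hϑa, ?_⟩
  · exact_mod_cast sub_nonneg.mp (hre ▸ ha')
  · push_cast
    exact hre ▸ hωa

/-- The `k`-th block projection `φ_k : Xₙ → M₂(ℂ)` is pure in `CP(Xₙ, M₂(ℂ))`. -/
theorem block_projection_on_Xn_is_pure (n : ℕ) (hn : 1 ≤ n) (k : Fin n)
    (ϑ ω : XSys n →ₗ[ℂ] Matrix (Fin 2) (Fin 2) ℂ)
    (hϑ : IsCPFun (XSys n) ϑ) (hω : IsCPFun (XSys n) ω)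
    (hsum : ϑ + ω = phiBlock n k) :
    ∃ s : ℝ, 0 ≤ s ∧ s ≤ 1 ∧
      ϑ = (s : ℂ) • phiBlock n k ∧ ω = ((1 - s : ℝ) : ℂ) • phiBlock n k :=
  block_projection_on_Xn_is_pure_general n k ϑ ω hϑ hω hsum
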